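/- For any integer k ≥ n with λ_{k+1} > 0, it holds that (1/n) Σ_{i≥1} L_{i,0}² ≥ (n/k) · ( (k − n)/(k − n + r_k) )². -/

import Mathlib

/-!
Split `n = Σ_i L_{i,0}` into the head `S = Σ_{i ≤ k} L_{i,0}` and the tail `T = n - S`.
Since `L_{i,0}` is monotone in `λ_i`, the head is at least `k L_{k+1,0}`, i.e.
`λ_{k+1} (k - S) ≤ S κ_0`, while `L_{i,0} ≤ λ_i / κ_0` bounds the tail: `T κ_0 ≤ r_k λ_{k+1}`.
Eliminating `κ_0 / λ_{k+1}` gives `(n - S)(k - S) ≤ r_k S`, hence `S ≥ n (k - n)/(k - n + r_k)`,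
and Cauchy–Schwarz `S² ≤ k Σ_i L_{i,0}²` finishes the proof.
-/

open Finset

noncomputable def learnability (κ x : ℝ) : ℝ := x / (x + κ)

section Learnability

variable {κ x y : ℝ}

theorem learnability_mul_add (hκ : 0 < κ) (hx : 0 ≤ x) : learnability κ x * (x + κ) = x :=
  div_mul_cancel₀ x (by positivity)

theorem learnability_nonneg (hκ : 0 < κ) (hx : 0 ≤ x) : 0 ≤ learnability κ x :=
  div_nonneg hx (by positivity)

theorem learnability_pos (hκ : 0 < κ) (hx : 0 < x) : 0 < learnability κ x :=
  div_pos hx (by positivity)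

theorem learnability_le_one (hκ : 0 < κ) (hx : 0 ≤ x) : learnability κ x ≤ 1 :=
  div_le_one_of_le₀ (by linarith) (by positivity)

theorem learnability_le_div (hκ : 0 < κ) (hx : 0 ≤ x) : learnability κ x ≤ x / κ :=
  div_le_div_of_nonneg_left hx hκ (by linarith)

theorem learnability_le_learnability (hκ : 0 < κ) (hx : 0 ≤ x) (hxy : x ≤ y) :
    learnability κ x ≤ learnability κ y := by
  unfold learnability
  rw [div_le_div_iff₀ (by positivity) (by linarith)]
  nlinarith

end Learnability

theorem sq_sum_range_le_mul_tsum_sq {f : ℕ → ℝ} (hsq : Summable fun i => f i ^ 2) (k : ℕ) :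
    (∑ i ∈ range k, f i) ^ 2 ≤ k * ∑' i, f i ^ 2 := by
  refine sq_sum_le_card_mul_sum_sq.trans ?_
  rw [card_range]
  gcongr
  exact hsq.sum_le_tsum _ fun i _ => sq_nonneg _

theorem tsum_nat_add_pos {f : ℕ → ℝ} (hf : Summable f) (hf0 : ∀ i, 0 ≤ f i) {k : ℕ}
    (hk : 0 < f k) : 0 < ∑' i, f (i + k) :=
  ((summable_nat_add_iff k).mpr hf).tsum_pos (fun i => hf0 _) 0 (by simpa using hk)

section Spectrum

variable {κ : ℝ} {lam : ℕ → ℝ}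

theorem summable_learnability (hκ : 0 < κ) (hlam : ∀ i, 0 ≤ lam i) (hsum : Summable lam) :
    Summable fun i => learnability κ (lam i) :=
  (hsum.div_const κ).of_nonneg_of_le (fun i => learnability_nonneg hκ (hlam i))
    fun i => learnability_le_div hκ (hlam i)

theorem summable_learnability_sq (hκ : 0 < κ) (hlam : ∀ i, 0 ≤ lam i) (hsum : Summable lam) :
    Summable fun i => learnability κ (lam i) ^ 2 :=
  (summable_learnability hκ hlam hsum).of_nonneg_of_le (fun i => sq_nonneg _) fun i => by
    have h0 := learnability_nonneg hκ (hlam i)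
    have h1 := learnability_le_one hκ (hlam i)
    nlinarith

theorem tsum_learnability_mul_le (hκ : 0 < κ) (hlam : ∀ i, 0 ≤ lam i) (hsum : Summable lam) :
    (∑' i, learnability κ (lam i)) * κ ≤ ∑' i, lam i := by
  rw [← le_div_iff₀ hκ, ← tsum_div_const]
  exact (summable_learnability hκ hlam hsum).tsum_le_tsum
    (fun i => learnability_le_div hκ (hlam i)) (hsum.div_const κ)

theorem card_mul_learnability_le_sum_range (hκ : 0 < κ) (hlam : ∀ i, 0 ≤ lam i)
    (hmono : Antitone lam) (k : ℕ) :
    k * learnability κ (lam k) ≤ ∑ i ∈ range k, learnability κ (lam i) := by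
  simpa using card_nsmul_le_sum (range k) (fun i => learnability κ (lam i)) _
    fun i hi => learnability_le_learnability hκ (hlam k) (hmono (mem_range.mp hi).le)

end Spectrum

theorem mul_sub_le_of_head_tail_bounds {n k r S κ μ : ℝ} (hκ : 0 < κ) (hμ : 0 ≤ μ)
    (hr : 0 ≤ r) (hSk : S ≤ k) (hhead : k * learnability κ μ ≤ S)
    (htail : (n - S) * κ ≤ r * μ) :
    n * (k - n) ≤ S * (k - n + r) := by
  have hhead' : μ * (k - S) ≤ S * κ := by
    have := mul_le_mul_of_nonneg_right hhead (by positivity : 0 ≤ μ + κ)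
    rw [mul_assoc, learnability_mul_add hκ hμ] at this
    linarith
  have hquad : (n - S) * (k - S) ≤ r * S := by
    refine le_of_mul_le_mul_right ?_ hκ
    calc (n - S) * (k - S) * κ = (n - S) * κ * (k - S) := by ring
      _ ≤ r * μ * (k - S) := mul_le_mul_of_nonneg_right htail (by linarith)
      _ = r * (μ * (k - S)) := by ring
      _ ≤ r * (S * κ) := mul_le_mul_of_nonneg_left hhead' hr
      _ = r * S * κ := by ring
  nlinarith [sq_nonneg (n - S)]

theorem div_mul_div_sq_le_one_div_mul {n k a b S Q : ℝ} (hn : 0 ≤ n) (hk : 0 < k)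
    (ha : 0 ≤ a) (hb : 0 < b) (hS : n * a ≤ S * b) (hCS : S ^ 2 ≤ k * Q) :
    n / k * (a / b) ^ 2 ≤ 1 / n * Q := by
  rcases hn.eq_or_lt with rfl | hn
  · simp
  have hnab : n * a / b ≤ S := (div_le_iff₀ hb).mpr hS
  calc n / k * (a / b) ^ 2 = (n * a / b) ^ 2 / (n * k) := by field_simp
    _ ≤ S ^ 2 / (n * k) := by gcongr
    _ ≤ k * Q / (n * k) := by gcongr
    _ = 1 / n * Q := by field_simp

/-- `lam i` is `λ_{i+1}`, so `r k = (Σ_{i>k} λ_i)/λ_{k+1}`. -/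
theorem e0_catastrophic_lower_bound_general
    (n : ℕ)
    (lam : ℕ → ℝ) (hlam_nonneg : ∀ i, 0 ≤ lam i) (hlam_mono : Antitone lam)
    (hlam_summable : Summable lam)
    (κ0 : ℝ) (hκ0 : 0 < κ0)
    (hκ0_eq : ∑' i, lam i / (lam i + κ0) = (n : ℝ))
    (k : ℕ) (hk : n ≤ k) (hlamk : 0 < lam k)
    (r : ℕ → ℝ) (hr : ∀ j, r j = (∑' i, lam (j + i)) / lam j) :
    ((n : ℝ) / k) * (((k : ℝ) - n) / ((k : ℝ) - n + r k)) ^ 2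
      ≤ (1 / (n : ℝ)) * ∑' i, (lam i / (lam i + κ0)) ^ 2 := by
  change _ ≤ 1 / (n : ℝ) * ∑' i, learnability κ0 (lam i) ^ 2
  change ∑' i, learnability κ0 (lam i) = n at hκ0_eq
  set S := ∑ i ∈ range k, learnability κ0 (lam i)
  have hsum := summable_learnability hκ0 hlam_nonneg hlam_summable
  have hsplit : S + ∑' i, learnability κ0 (lam (i + k)) = n := by
    rw [hsum.sum_add_tsum_nat_add k, hκ0_eq]
  have htail_pos : 0 < ∑' i, learnability κ0 (lam (i + k)) :=
    tsum_nat_add_pos hsum (fun i => learnability_nonneg hκ0 (hlam_nonneg i))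
      (learnability_pos hκ0 hlamk)
  have hrk : r k * lam k = ∑' i, lam (i + k) := by
    rw [hr k, div_mul_cancel₀ _ hlamk.ne']
    exact tsum_congr fun i => by rw [add_comm]
  have hrk_pos : 0 < r k := by
    have := tsum_nat_add_pos hlam_summable hlam_nonneg hlamk
    rw [← hrk] at this
    exact pos_of_mul_pos_left this hlamk.le
  have htail : (n - S) * κ0 ≤ r k * lam k := by
    rw [hrk, ← hsplit, add_sub_cancel_left]
    exact tsum_learnability_mul_le hκ0 (fun i => hlam_nonneg _)
      ((summable_nat_add_iff k).mpr hlam_summable)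
  have hk_cast : (n : ℝ) ≤ k := by exact_mod_cast hk
  have hS_nonneg : 0 ≤ S := sum_nonneg fun i _ => learnability_nonneg hκ0 (hlam_nonneg i)
  have hS_bound : n * (k - n) ≤ S * (k - n + r k) :=
    mul_sub_le_of_head_tail_bounds hκ0 hlamk.le hrk_pos.le (by linarith)
      (card_mul_learnability_le_sum_range hκ0 hlam_nonneg hlam_mono k) htail
  have hCS : S ^ 2 ≤ k * ∑' i, learnability κ0 (lam i) ^ 2 :=
    sq_sum_range_le_mul_tsum_sq (summable_learnability_sq hκ0 hlam_nonneg hlam_summable) k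
  exact div_mul_div_sq_le_one_div_mul (Nat.cast_nonneg n) (by linarith) (by linarith)
    (by linarith) hS_bound hCS

/-- Catastrophic lower bound: For any integer `k ≥ n` with
`λ_{k+1} > 0`, `(1/n) Σ_i L_{i,0}² ≥ (n/k)·((k − n)/(k − n + r_k))²`.
(Here `lam i` denotes `λ_{i+1}`, so `r k = (Σ_{i>k} λ_i)/λ_{k+1}`.) -/
theorem e0_catastrophic_lower_bound
    (n : ℕ) (hn : 1 ≤ n)
    (lam : ℕ → ℝ) (hlam_nonneg : ∀ i, 0 ≤ lam i) (hlam_mono : Antitone lam)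
    (hlam_summable : Summable lam) (hlam_ne : ∃ i, lam i ≠ 0)
    (κ0 : ℝ) (hκ0 : 0 < κ0)
    (hκ0_eq : ∑' i, lam i / (lam i + κ0) = (n : ℝ))
    (k : ℕ) (hk : n ≤ k) (hlamk : 0 < lam k)
    (r : ℕ → ℝ) (hr : ∀ j, r j = (∑' i, lam (j + i)) / lam j) :
    ((n : ℝ) / k) * (((k : ℝ) - n) / ((k : ℝ) - n + r k)) ^ 2
      ≤ (1 / (n : ℝ)) * ∑' i, (lam i / (lam i + κ0)) ^ 2 :=
  e0_catastrophic_lower_bound_general n lam hlam_nonneg hlam_mono hlam_summable κ0 hκ0 hκ0_eq k hk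
    hlamk r hr
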